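/- Let E, F be Banach lattices and let T : E → F be an order bounded AMAL-compact operator. Then T maps every disjointly weakly compact subset of E onto a |σ|(F,F′)-totally bounded subset of F. -/

import Mathlib

open Filter Topology ZeroAtInfty Set Bornology

noncomputable section

section Defs

variable {E F X : Type*}

/-- Two elements of a lattice group are (lattice) disjoint. -/
def LatDisjoint [Lattice E] [AddCommGroup E] (x y : E) : Prop := |x| ⊓ |y| = 0

/-- A pairwise disjoint sequence. -/
def DisjointSeq [Lattice E] [AddCommGroup E] (x : ℕ → E) : Prop :=
  ∀ m n, m ≠ n → LatDisjoint (x m) (x n)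

variable [NormedAddCommGroup X] [NormedSpace ℝ X]

/-- A weakly null sequence in a normed space. -/
def WeaklyNull (x : ℕ → X) : Prop :=
  ∀ f : X →L[ℝ] ℝ, Tendsto (fun n => f (x n)) atTop (𝓝 0)

/-- A weakly Cauchy sequence. -/
def WeaklyCauchy (x : ℕ → X) : Prop :=
  ∀ f : X →L[ℝ] ℝ, ∃ l : ℝ, Tendsto (fun n => f (x n)) atTop (𝓝 l)

/-- A weakly precompact set: every sequence has a weakly Cauchy subsequence. -/
def WeaklyPrecompactSet (A : Set X) : Prop :=
  ∀ x : ℕ → X, (∀ n, x n ∈ A) → ∃ φ : ℕ → ℕ, StrictMono φ ∧ WeaklyCauchy (x ∘ φ)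

/-- A relatively weakly compact set: closure in the weak topology is compact. -/
def RelWeaklyCompact (A : Set X) : Prop :=
  IsCompact (closure ((toWeakSpace ℝ X) '' A))

/-- A weakly sequentially complete space. -/
def WeaklySeqComplete (X : Type*) [NormedAddCommGroup X] [NormedSpace ℝ X] : Prop :=
  ∀ x : ℕ → X, WeaklyCauchy x → ∃ l : X, ∀ f : X →L[ℝ] ℝ,
    Tendsto (fun n => f (x n)) atTop (𝓝 (f l))

/-- A weak*-null sequence of functionals. -/
def WeakStarNull (f : ℕ → X →L[ℝ] ℝ) : Prop :=
  ∀ x : X, Tendsto (fun n => f n x) atTop (𝓝 0)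

/-- A sequence of functionals converges uniformly to zero on a set `A`. -/
def UnifZeroOn (f : ℕ → X →L[ℝ] ℝ) (A : Set X) : Prop :=
  ∀ ε > (0:ℝ), ∃ N : ℕ, ∀ n ≥ N, ∀ x ∈ A, |f n x| < ε

/-- A limited set. -/
def LimitedSet (A : Set X) : Prop :=
  IsBounded A ∧ ∀ f : ℕ → X →L[ℝ] ℝ, WeakStarNull f → UnifZeroOn f A

variable [NormedAddCommGroup E] [Lattice E] [HasSolidNorm E] [IsOrderedAddMonoid E] [NormedSpace ℝ E]
  [NormedAddCommGroup F] [Lattice F] [HasSolidNorm F] [IsOrderedAddMonoid F] [NormedSpace ℝ F]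

/-- An almost Dunford–Pettis operator: sends disjoint weakly null sequences to norm null ones. -/
def AlmostDP (T : E →L[ℝ] X) : Prop :=
  ∀ x : ℕ → E, DisjointSeq x → WeaklyNull x → Tendsto (fun n => ‖T (x n)‖) atTop (𝓝 0)

/-- A Dunford–Pettis operator: sends weakly null sequences to norm null ones. -/
def DunfordPettisOp (T : E →L[ℝ] X) : Prop :=
  ∀ x : ℕ → E, WeaklyNull x → Tendsto (fun n => ‖T (x n)‖) atTop (𝓝 0)

/-- An almost L-set in the dual: disjoint weakly null sequences of `E` converge to zero
uniformly on `B`. -/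
def AlmostLSet (B : Set (E →L[ℝ] ℝ)) : Prop :=
  IsBounded B ∧ ∀ x : ℕ → E, DisjointSeq x → WeaklyNull x →
    ∀ ε > (0:ℝ), ∃ N : ℕ, ∀ n ≥ N, ∀ f ∈ B, |f (x n)| < ε

/-- An almost L-sequence in the dual. -/
def AlmostLSeq (f : ℕ → E →L[ℝ] ℝ) : Prop := AlmostLSet (Set.range f)

/-- A super weakly precompact set: a bounded set mapped to a relatively compact subset of `c₀`
by every almost Dunford–Pettis operator. -/
def SuperWeaklyPrecompact (A : Set E) : Prop :=
  IsBounded A ∧ ∀ T : E →L[ℝ] C₀(ℕ, ℝ), AlmostDP T → IsCompact (closure (T '' A))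

/-- The solid hull of a set in a Banach lattice. -/
def SolidHull (A : Set E) : Set E := {y | ∃ x ∈ A, |y| ≤ |x|}

/-- An L-weakly compact set. -/
def LWeaklyCompact (A : Set E) : Prop :=
  IsBounded A ∧ ∀ x : ℕ → E, (∀ n, x n ∈ SolidHull A) → DisjointSeq x →
    Tendsto (fun n => ‖x n‖) atTop (𝓝 0)

/-- A disjointly weakly compact set. -/
def DisjointlyWeaklyCompact (A : Set E) : Prop :=
  IsBounded A ∧ ∀ x : ℕ → E, (∀ n, x n ∈ SolidHull A) → DisjointSeq x → WeaklyNull x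

/-- The positive Schur property. -/
def PositiveSchur (E : Type*) [NormedAddCommGroup E] [Lattice E] [HasSolidNorm E] [IsOrderedAddMonoid E] [NormedSpace ℝ E] : Prop :=
  ∀ x : ℕ → E, DisjointSeq x → WeaklyNull x → Tendsto (fun n => ‖x n‖) atTop (𝓝 0)

/-- `|f|(|x|)`, via the Riesz–Kantorovich formula `|f|(|x|) = sup {f y : |y| ≤ |x|}`. -/
def pabs (f : E →L[ℝ] ℝ) (x : E) : ℝ := sSup ((fun y => f y) '' {y : E | |y| ≤ |x|})

/-- Totally bounded for the absolute weak topology `|σ|(E,E')` generated by the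
seminorms `x ↦ |f|(|x|)`. -/
def AWTotallyBounded (A : Set E) : Prop :=
  ∀ ε > (0:ℝ), ∀ s : Finset (E →L[ℝ] ℝ), ∃ Φ : Finset E, ↑Φ ⊆ A ∧
    ∀ x ∈ A, ∃ y ∈ Φ, ∀ f ∈ s, pabs f (x - y) < ε

/-- Pointwise order on the dual: `f ≤ g` iff `f x ≤ g x` for all `x ≥ 0`. -/
def dualLe (f g : E →L[ℝ] ℝ) : Prop := ∀ x : E, 0 ≤ x → f x ≤ g x

/-- Order bounded operator: maps order intervals into order intervals. -/
def OrderBoundedOp (T : E →L[ℝ] F) : Prop :=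
  ∀ a b : E, ∃ c d : F, T '' Set.Icc a b ⊆ Set.Icc c d

/-- PL-compact operator: the image of the closed unit ball is `|σ|(F,F')`-totally bounded. -/
def PLCompact (T : E →L[ℝ] F) : Prop :=
  AWTotallyBounded (T '' Metric.closedBall 0 1)

/-- AMAL-compact operator: the image of every order interval is `|σ|(F,F')`-totally bounded. -/
def AMALCompact (T : E →L[ℝ] F) : Prop :=
  ∀ x : E, 0 ≤ x → AWTotallyBounded (T '' Set.Icc (-x) x)

/-- The dual norm is order continuous: `‖f_α‖ → 0` for every decreasing net `f_α ↓ 0`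
of positive functionals. -/
def DualOrderContinuousNorm (E : Type*) [NormedAddCommGroup E] [Lattice E] [HasSolidNorm E] [IsOrderedAddMonoid E] [NormedSpace ℝ E] : Prop :=
  ∀ (ι : Type) (_ : Preorder ι) (_ : Nonempty ι),
    (∀ i j : ι, ∃ k, i ≤ k ∧ j ≤ k) → ∀ f : ι → E →L[ℝ] ℝ,
    (∀ i j, i ≤ j → dualLe (f j) (f i)) →
    (∀ i, dualLe 0 (f i)) →
    (∀ g, (∀ i, dualLe g (f i)) → dualLe g 0) →
    Tendsto (fun i => ‖f i‖) atTop (𝓝 0)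

/-- An atom of the dual lattice: a positive nonzero functional such that any two disjoint
positive functionals below it cannot both be nonzero. -/
def DualAtom (a : E →L[ℝ] ℝ) : Prop :=
  dualLe 0 a ∧ a ≠ 0 ∧
  ∀ b c : E →L[ℝ] ℝ, dualLe 0 b → dualLe b a → dualLe 0 c → dualLe c a →
    (∀ x : E, 0 ≤ x → ∀ ε > (0:ℝ), ∃ y : E, 0 ≤ y ∧ y ≤ x ∧ b y + c (x - y) < ε) →
    b = 0 ∨ c = 0

/-- `|f|` is disjoint from the positive functional `a`, i.e. `(|f| ⊓ a)(x) = 0` for `x ≥ 0`. -/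
def dualAbsDisjoint (f a : E →L[ℝ] ℝ) : Prop :=
  ∀ x : E, 0 ≤ x → ∀ ε > (0:ℝ), ∃ y : E, 0 ≤ y ∧ y ≤ x ∧ pabs f y + a (x - y) < ε

/-- The dual Banach lattice is discrete: the band generated by its atoms is everything,
i.e. the disjoint complement of the set of atoms is trivial. -/
def DualDiscrete (E : Type*) [NormedAddCommGroup E] [Lattice E] [HasSolidNorm E] [IsOrderedAddMonoid E] [NormedSpace ℝ E] : Prop :=
  ∀ f : E →L[ℝ] ℝ, (∀ a : E →L[ℝ] ℝ, DualAtom a → dualAbsDisjoint f a) → f = 0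

/-- The absolute weak* topology `|σ|(E',E)` on the dual, generated by the
seminorms `f ↦ |f|(|x|)`. -/
def awStarTop (E : Type*) [NormedAddCommGroup E] [Lattice E] [HasSolidNorm E] [IsOrderedAddMonoid E] [NormedSpace ℝ E] :
    TopologicalSpace (E →L[ℝ] ℝ) :=
  ⨅ x : E, TopologicalSpace.induced (fun f => pabs f x) inferInstance

end Defs

/-!
Fix `ε > 0` and finitely many `f ∈ F'`. Since `T` is order bounded, the Riesz–Kantorovich formula
makes `(∑ |f|) ∘ |T|` a positive functional `φ` on `E` with `|f|(|T z|) ≤ φ |z|`; positive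
functionals on a Banach lattice are continuous. A disjointly weakly compact `A` is almost order
bounded for `φ`: some `u ≥ 0` has `φ (|x| - u)⁺ ≤ ε/2` on `A`, for otherwise one extracts a
disjoint sequence in the solid hull of `A` on which `φ` does not tend to `0`. Truncating at `u`
then moves each `T x` by at most `ε/2` into `T[-u, u]`, which is `|σ|(F,F')`-totally bounded.
-/

section OrderedModule

variable {E : Type*} [NormedAddCommGroup E] [Lattice E] [HasSolidNorm E] [IsOrderedAddMonoid E]
  [NormedSpace ℝ E]

/- Dyadic multiples `⌊c 2ⁿ⌋₊ / 2ⁿ • x` are positive because halving preserves positivity in a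
lattice-ordered group (`nsmul_two_semiclosed`); they converge to `c • x` and the cone is closed. -/
theorem smul_nonneg_of_hasSolidNorm {c : ℝ} (hc : 0 ≤ c) {x : E} (hx : 0 ≤ x) : 0 ≤ c • x := by
  have half : ∀ n : ℕ, 0 ≤ (2⁻¹ : ℝ) ^ n • x := by
    intro n
    induction n with
    | zero => simpa using hx
    | succ n ih =>
      refine nsmul_two_semiclosed ?_
      rwa [← Nat.cast_smul_eq_nsmul ℝ, smul_smul, Nat.cast_ofNat, pow_succ, mul_comm,
        mul_assoc, inv_mul_cancel₀ two_ne_zero, mul_one]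
  have dyadic : ∀ n : ℕ, 0 ≤ ((⌊c * 2 ^ n⌋₊ : ℝ) / 2 ^ n) • x := fun n => by
    rw [div_eq_mul_inv, ← inv_pow, mul_smul, Nat.cast_smul_eq_nsmul]
    exact nsmul_nonneg (half n) _
  have lim : Tendsto (fun n : ℕ => (⌊c * 2 ^ n⌋₊ : ℝ) / 2 ^ n) atTop (𝓝 c) :=
    (tendsto_nat_floor_mul_div_atTop hc).comp (tendsto_pow_atTop_atTop_of_one_lt one_lt_two)
  exact isClosed_nonneg.mem_of_tendsto (lim.smul_const x) (Eventually.of_forall dyadic)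

instance HasSolidNorm.isOrderedModule : IsOrderedModule ℝ E :=
  .of_smul_nonneg fun _ hc _ hx => smul_nonneg_of_hasSolidNorm hc hx

end OrderedModule

section LatticeModule

variable {M : Type*} [Lattice M] [AddCommGroup M] [Module ℝ M] [PosSMulMono ℝ M]

theorem smul_sup_of_nonneg {c : ℝ} (hc : 0 ≤ c) (x y : M) : c • (x ⊔ y) = c • x ⊔ c • y := by
  rcases hc.eq_or_lt with rfl | hc
  · simp
  · exact (OrderIso.smulRight hc).map_sup x y

theorem abs_smul_of_nonneg {c : ℝ} (hc : 0 ≤ c) (x : M) : |c • x| = c • |x| := by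
  simp only [abs, smul_sup_of_nonneg hc, smul_neg]

theorem posPart_smul_of_nonneg {c : ℝ} (hc : 0 ≤ c) (x : M) : (c • x)⁺ = c • x⁺ := by
  simp only [posPart_def, smul_sup_of_nonneg hc, smul_zero]

end LatticeModule

section Truncation

variable {E : Type*} [Lattice E] [AddCommGroup E] [IsOrderedAddMonoid E]

theorem mem_Icc_of_abs_le {w x : E} (h : |w| ≤ x) : w ∈ Set.Icc (-x) x :=
  ⟨neg_le.1 ((neg_le_abs w).trans h), (le_abs_self w).trans h⟩

theorem abs_truncate_le {u : E} (hu : 0 ≤ u) (x : E) : |(x ⊔ -u) ⊓ u| ≤ u :=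
  abs_le'.2 ⟨inf_le_right, neg_le.1 (le_inf le_sup_right (neg_le_self hu))⟩

theorem abs_sub_truncate_le (u x : E) : |x - (x ⊔ -u) ⊓ u| ≤ (|x| - u)⁺ := by
  refine abs_le'.2 ⟨?_, ?_⟩
  · rw [sub_inf, sub_sup, sub_self]
    exact sup_le (inf_le_left.trans (posPart_nonneg _))
      ((sub_le_sub_right (le_abs_self x) u).trans (le_posPart _))
  · rw [neg_sub]
    calc (x ⊔ -u) ⊓ u - x ≤ (x ⊔ -u) - x := sub_le_sub_right inf_le_left x
      _ = (-u - x)⁺ := by rw [sup_sub, sub_self, posPart_def, sup_comm]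
      _ ≤ (|x| - u)⁺ := posPart_mono <| by
        rw [sub_eq_add_neg, add_comm, ← sub_eq_add_neg]
        exact sub_le_sub_right (neg_le_abs x) u

/-- Riesz decomposition, with the truncation of `y` at level `a` as first summand. -/
theorem exists_add_eq_of_abs_le_add {y a b : E} (ha : 0 ≤ a) (hb : 0 ≤ b) (h : |y| ≤ a + b) :
    ∃ y₁ y₂ : E, y = y₁ + y₂ ∧ |y₁| ≤ a ∧ |y₂| ≤ b := by
  refine ⟨(y ⊔ -a) ⊓ a, y - (y ⊔ -a) ⊓ a, by abel, abs_truncate_le ha y, ?_⟩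
  refine (abs_sub_truncate_le a y).trans ?_
  rw [posPart_def]
  exact sup_le (sub_le_iff_le_add.2 (h.trans_eq (add_comm a b))) hb

end Truncation

section Pabs

open scoped Pointwise

variable {F : Type*} [NormedAddCommGroup F] [Lattice F] [NormedSpace ℝ F] (f : F →L[ℝ] ℝ)

theorem pabs_neg (x : F) : pabs f (-x) = pabs f x := by
  rw [pabs, pabs, abs_neg]

theorem pabs_le [IsOrderedAddMonoid F] {x : F} {c : ℝ} (h : ∀ y : F, |y| ≤ |x| → f y ≤ c) :
    pabs f x ≤ c :=
  csSup_le ⟨f 0, 0, by simp, rfl⟩ (by rintro _ ⟨y, hy, rfl⟩; exact h y hy)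

theorem pabs_abs [IsOrderedAddMonoid F] (x : F) : pabs f |x| = pabs f x := by
  rw [pabs, pabs, abs_abs]

variable [HasSolidNorm F]

theorem pabs_bddAbove (x : F) :
    BddAbove ((fun y => f y) '' {y : F | |y| ≤ |x|}) := by
  refine ⟨‖f‖ * ‖x‖, ?_⟩
  rintro _ ⟨y, hy, rfl⟩
  exact (le_abs_self _).trans ((f.le_opNorm y).trans
    (by gcongr; exact norm_le_norm_of_abs_le_abs hy))

theorem le_pabs {x y : F} (h : |y| ≤ |x|) : f y ≤ pabs f x :=
  le_csSup (pabs_bddAbove f x) ⟨y, h, rfl⟩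

variable [IsOrderedAddMonoid F]

theorem pabs_nonneg (x : F) : 0 ≤ pabs f x := by
  simpa using le_pabs f (y := 0) (x := x) (by simp)

theorem pabs_add_le (a b : F) : pabs f (a + b) ≤ pabs f a + pabs f b := by
  refine pabs_le f fun y hy => ?_
  obtain ⟨y₁, y₂, rfl, h₁, h₂⟩ :=
    exists_add_eq_of_abs_le_add (abs_nonneg a) (abs_nonneg b) (hy.trans (abs_add_le a b))
  rw [map_add]
  exact add_le_add (le_pabs f h₁) (le_pabs f h₂)

theorem pabs_sub_le (a b c : F) : pabs f (a - b) ≤ pabs f (a - c) + pabs f (c - b) := by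
  simpa using pabs_add_le f (a - c) (c - b)

theorem pabs_add_of_nonneg {a b : F} (ha : 0 ≤ a) (hb : 0 ≤ b) :
    pabs f (a + b) = pabs f a + pabs f b := by
  refine le_antisymm (pabs_add_le f a b) ?_
  have hsum : ∀ y₁ y₂ : F, |y₁| ≤ |a| → |y₂| ≤ |b| → f y₁ + f y₂ ≤ pabs f (a + b) :=
    fun y₁ y₂ h₁ h₂ => by
      rw [← map_add]
      refine le_pabs f ((abs_add_le y₁ y₂).trans ?_)
      rw [abs_of_nonneg (add_nonneg ha hb), ← abs_of_nonneg ha, ← abs_of_nonneg hb]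
      exact add_le_add h₁ h₂
  have : pabs f a ≤ pabs f (a + b) - pabs f b := pabs_le f fun y₁ h₁ =>
    le_sub_comm.1 (pabs_le f fun y₂ h₂ => le_sub_iff_add_le'.2 (hsum y₁ y₂ h₁ h₂))
  linarith

theorem pabs_smul {c : ℝ} (hc : 0 < c) (x : F) : pabs f (c • x) = c * pabs f x := by
  have hball : {y : F | |y| ≤ |c • x|} = c • {y : F | |y| ≤ |x|} := by
    ext y
    rw [Set.mem_smul_set_iff_inv_smul_mem₀ hc.ne']
    change |y| ≤ |c • x| ↔ |c⁻¹ • y| ≤ |x|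
    rw [abs_smul_of_nonneg (inv_nonneg.2 hc.le), abs_smul_of_nonneg hc.le,
      inv_smul_le_iff_of_pos hc]
  rw [pabs, pabs, hball, image_smul_set, Real.sSup_smul_of_nonneg hc.le, smul_eq_mul]

end Pabs

section PositiveFunctional

variable {M : Type*} [Lattice M] [AddCommGroup M] [Module ℝ M]

theorem abs_apply_le_apply_abs {φ : M →ₗ[ℝ] ℝ} (hφ : Monotone φ) (x : M) : |φ x| ≤ φ |x| :=
  abs_le'.2 ⟨hφ (le_abs_self x), by simpa using hφ (neg_le_abs x)⟩

variable [IsOrderedAddMonoid M] [PosSMulMono ℝ M]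

/-- Kantorovich extension: the linear functional is `x ↦ θ x⁺ - θ x⁻`. -/
theorem exists_monotone_linearMap_eq (θ : M → ℝ) (hθ : ∀ x, 0 ≤ x → 0 ≤ θ x)
    (hadd : ∀ x y, 0 ≤ x → 0 ≤ y → θ (x + y) = θ x + θ y)
    (hsmul : ∀ c : ℝ, 0 < c → ∀ x, 0 ≤ x → θ (c • x) = c * θ x) :
    ∃ φ : M →ₗ[ℝ] ℝ, Monotone φ ∧ ∀ x, 0 ≤ x → φ x = θ x := by
  have hzero : θ 0 = 0 := by simpa using hadd 0 0 le_rfl le_rfl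
  have hsmul' : ∀ c : ℝ, 0 ≤ c → ∀ x, 0 ≤ x → θ (c • x) = c * θ x := by
    intro c hc x hx
    rcases hc.eq_or_lt with rfl | hc
    · simp [hzero]
    · exact hsmul c hc x hx
  have hsub : ∀ a b : M, 0 ≤ a → 0 ≤ b → θ (a - b)⁺ - θ (a - b)⁻ = θ a - θ b := by
    intro a b ha hb
    have hab : (a - b)⁺ + b = (a - b)⁻ + a := by
      rw [add_comm _ a, ← sub_eq_sub_iff_add_eq_add, posPart_sub_negPart]
    have := congrArg θ hab
    rw [hadd _ _ (posPart_nonneg _) hb, hadd _ _ (negPart_nonneg _) ha] at this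
    linarith
  let φ : M →ₗ[ℝ] ℝ :=
    { toFun x := θ x⁺ - θ x⁻
      map_add' x y := by
        have hxy : x + y = (x⁺ + y⁺) - (x⁻ + y⁻) := by
          rw [add_sub_add_comm, posPart_sub_negPart, posPart_sub_negPart]
        rw [hxy, hsub _ _ (add_nonneg (posPart_nonneg x) (posPart_nonneg y))
          (add_nonneg (negPart_nonneg x) (negPart_nonneg y)), hadd _ _ (posPart_nonneg x)
          (posPart_nonneg y), hadd _ _ (negPart_nonneg x) (negPart_nonneg y)]
        ring
      map_smul' c x := by
        simp only [RingHom.id_apply, smul_eq_mul]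
        rcases le_or_gt 0 c with hc | hc
        · have hcx : c • x = c • x⁺ - c • x⁻ := by rw [← smul_sub, posPart_sub_negPart]
          rw [hcx, hsub _ _ (smul_nonneg hc (posPart_nonneg x)) (smul_nonneg hc (negPart_nonneg x)),
            hsmul' c hc _ (posPart_nonneg x), hsmul' c hc _ (negPart_nonneg x)]
          ring
        · have hcx : c • x = (-c) • x⁻ - (-c) • x⁺ := by
            rw [← smul_sub, neg_smul, ← smul_neg, neg_sub, posPart_sub_negPart]
          rw [hcx, hsub _ _ (smul_nonneg (neg_nonneg.2 hc.le) (negPart_nonneg x))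
            (smul_nonneg (neg_nonneg.2 hc.le) (posPart_nonneg x)),
            hsmul' _ (neg_nonneg.2 hc.le) _ (negPart_nonneg x),
            hsmul' _ (neg_nonneg.2 hc.le) _ (posPart_nonneg x)]
          ring }
  have hφ : ∀ x, 0 ≤ x → φ x = θ x := fun x hx => by
    simp [φ, posPart_of_nonneg hx, negPart_eq_zero.2 hx, hzero]
  refine ⟨φ, fun a b hab => ?_, hφ⟩
  have := hφ (b - a) (sub_nonneg.2 hab) ▸ hθ _ (sub_nonneg.2 hab)
  rw [map_sub] at this
  linarith

end PositiveFunctional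

section AutomaticContinuity

variable {E : Type*} [NormedAddCommGroup E] [Lattice E] [HasSolidNorm E] [IsOrderedAddMonoid E]
  [NormedSpace ℝ E] [CompleteSpace E]

/- If `φ` were unbounded on the positive part of the unit ball, pick `xₙ` there with
`φ xₙ > 4ⁿ`: then `φ (∑ 2⁻ⁿ xₙ) > 2ⁿ` for every `n`. -/
theorem LinearMap.exists_bound_of_monotone {φ : E →ₗ[ℝ] ℝ} (hφ : Monotone φ) :
    ∃ C, ∀ x, ‖φ x‖ ≤ C * ‖x‖ := by
  suffices ∃ C, ∀ x, 0 ≤ x → ‖x‖ < 1 → φ x ≤ C by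
    obtain ⟨C, hC⟩ := this
    refine LinearMap.bound_of_ball_bound one_pos C φ fun z hz => ?_
    rw [mem_ball_zero_iff] at hz
    exact (abs_apply_le_apply_abs hφ z).trans
      (hC |z| (abs_nonneg z) (by rwa [norm_abs_eq_norm]))
  by_contra! h
  choose x hx0 hx1 hxφ using fun n : ℕ => h (4 ^ n)
  have hsum : Summable fun n => (2⁻¹ : ℝ) ^ n • x n := by
    refine Summable.of_norm_bounded (summable_geometric_of_lt_one (by norm_num)
      (by norm_num : (2⁻¹ : ℝ) < 1)) fun n => ?_
    rw [norm_smul, norm_pow, norm_inv, Real.norm_ofNat]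
    exact mul_le_of_le_one_right (by positivity) (hx1 n).le
  have hterm : ∀ n : ℕ, (2 : ℝ) ^ n < φ (∑' k, (2⁻¹ : ℝ) ^ k • x k) := fun n =>
    calc (2 : ℝ) ^ n = 2⁻¹ ^ n * 4 ^ n := by
          rw [← mul_pow]; norm_num
      _ < 2⁻¹ ^ n * φ (x n) := by gcongr; exact hxφ n
      _ = φ ((2⁻¹ : ℝ) ^ n • x n) := by rw [map_smul, smul_eq_mul]
      _ ≤ φ (∑' k, (2⁻¹ : ℝ) ^ k • x k) :=
          hφ (hsum.le_tsum n fun k _ => smul_nonneg (by positivity) (hx0 k))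
  obtain ⟨n, hn⟩ := pow_unbounded_of_one_lt (φ (∑' k, (2⁻¹ : ℝ) ^ k • x k)) one_lt_two
  exact (hterm n).not_gt hn

end AutomaticContinuity

section LatticeMajorant

variable {E : Type*} [Lattice E] [AddCommGroup E]

def latticeMajorantSet (p : E → ℝ) (x : E) : Set ℝ :=
  (fun l : List E => (l.map p).sum) '' {l | (l.map abs).sum ≤ x}

/-- The Riesz–Kantorovich formula `x ↦ sup {∑ p zᵢ : ∑ |zᵢ| ≤ x}`, meant for `x ≥ 0`. -/
def latticeMajorant (p : E → ℝ) (x : E) : ℝ := sSup (latticeMajorantSet p x)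

variable {p : E → ℝ}

theorem sum_le_latticeMajorant {x : E} (hbdd : BddAbove (latticeMajorantSet p x)) {l : List E}
    (hl : (l.map abs).sum ≤ x) : (l.map p).sum ≤ latticeMajorant p x :=
  le_csSup hbdd ⟨l, hl, rfl⟩

theorem latticeMajorant_le {x : E} (hx : 0 ≤ x) {c : ℝ}
    (h : ∀ l : List E, (l.map abs).sum ≤ x → (l.map p).sum ≤ c) : latticeMajorant p x ≤ c :=
  csSup_le ⟨0, [], by simpa using hx, rfl⟩ (by rintro _ ⟨l, hl, rfl⟩; exact h l hl)

theorem latticeMajorant_nonneg {x : E} (hbdd : BddAbove (latticeMajorantSet p x)) (hx : 0 ≤ x) :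
    0 ≤ latticeMajorant p x := by
  simpa using sum_le_latticeMajorant hbdd (l := []) (by simpa using hx)

theorem le_latticeMajorant_abs (z : E) (hbdd : BddAbove (latticeMajorantSet p |z|)) :
    p z ≤ latticeMajorant p |z| := by
  simpa using sum_le_latticeMajorant hbdd (l := [z]) (by simp)

theorem latticeMajorant_smul_le [Module ℝ E] [PosSMulMono ℝ E]
    (hhom : ∀ c : ℝ, 0 < c → ∀ z, p (c • z) = c * p z)
    (hbdd : ∀ x, BddAbove (latticeMajorantSet p x)) {c : ℝ} (hc : 0 < c) {x : E} (hx : 0 ≤ x) :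
    latticeMajorant p (c • x) ≤ c * latticeMajorant p x := by
  refine latticeMajorant_le (smul_nonneg hc.le hx) fun l hl => ?_
  have hl' : ((l.map (c⁻¹ • ·)).map abs).sum ≤ x := by
    have hsum : ((l.map (c⁻¹ • ·)).map abs).sum = c⁻¹ • (l.map abs).sum := by
      rw [List.smul_sum, List.map_map, List.map_map]
      exact congrArg List.sum (List.map_congr_left fun z _ =>
        abs_smul_of_nonneg (inv_nonneg.2 hc.le) z)
    rw [hsum, inv_smul_le_iff_of_pos hc]
    exact hl
  calc (l.map p).sum = c * ((l.map (c⁻¹ • ·)).map p).sum := by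
        rw [List.map_map, ← List.sum_map_mul_left]
        congr 1
        refine List.map_congr_left fun z _ => ?_
        rw [Function.comp_apply, ← hhom c hc, smul_inv_smul₀ hc.ne']
    _ ≤ c * latticeMajorant p x := by gcongr; exact sum_le_latticeMajorant (hbdd x) hl'

theorem latticeMajorant_smul [Module ℝ E] [PosSMulMono ℝ E]
    (hhom : ∀ c : ℝ, 0 < c → ∀ z, p (c • z) = c * p z)
    (hbdd : ∀ x, BddAbove (latticeMajorantSet p x)) {c : ℝ} (hc : 0 < c) {x : E} (hx : 0 ≤ x) :
    latticeMajorant p (c • x) = c * latticeMajorant p x := by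
  refine le_antisymm (latticeMajorant_smul_le hhom hbdd hc hx) ?_
  have := latticeMajorant_smul_le hhom hbdd (inv_pos.2 hc) (smul_nonneg hc.le hx)
  rw [inv_smul_smul₀ hc.ne'] at this
  exact (le_inv_mul_iff₀ hc).1 this

variable [IsOrderedAddMonoid E]

/- Split off `x₀ = |z| ⊓ x` and `|z| - x₀ ≤ y` from the first term `z` by Riesz decomposition,
and recurse on the tail with `x - x₀` and `y - (|z| - x₀)`. -/
theorem exists_split_of_sum_abs_le (hsub : ∀ a b, p (a + b) ≤ p a + p b) (l : List E) {x y : E}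
    (hx : 0 ≤ x) (hy : 0 ≤ y) (hl : (l.map abs).sum ≤ x + y) :
    ∃ la lb : List E, (la.map abs).sum ≤ x ∧ (lb.map abs).sum ≤ y ∧
      (l.map p).sum ≤ (la.map p).sum + (lb.map p).sum := by
  induction l generalizing x y with
  | nil => exact ⟨[], [], by simpa using hx, by simpa using hy, by simp⟩
  | cons z t ih =>
    rw [List.map_cons, List.sum_cons] at hl
    have htail : 0 ≤ (t.map abs).sum :=
      List.sum_nonneg fun a ha => by obtain ⟨b, -, rfl⟩ := List.mem_map.1 ha; exact abs_nonneg b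
    set x₀ := |z| ⊓ x
    have hy₀ : |z| - x₀ = (|z| - x)⁺ := by rw [sub_inf, sub_self, posPart_def, sup_comm]
    have hy₀y : |z| - x₀ ≤ y := by
      rw [hy₀, posPart_def]
      exact sup_le (sub_le_iff_le_add'.2 ((le_add_of_nonneg_right htail).trans hl)) hy
    obtain ⟨a, b, hab, ha, hb⟩ := exists_add_eq_of_abs_le_add (le_inf (abs_nonneg _) hx)
      (hy₀ ▸ posPart_nonneg _) (add_sub_cancel x₀ |z|).symm.le
    obtain ⟨la, lb, hla, hlb, hsum⟩ := ih (sub_nonneg.2 inf_le_right) (sub_nonneg.2 hy₀y)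
      (by rw [sub_add_sub_comm, add_sub_cancel, le_sub_iff_add_le']; exact hl)
    refine ⟨a :: la, b :: lb, ?_, ?_, ?_⟩
    · simpa using add_le_add ha hla
    · simpa using add_le_add hb hlb
    · simp only [List.map_cons, List.sum_cons]
      linarith [hab ▸ hsub a b]

theorem latticeMajorant_add (hsub : ∀ a b, p (a + b) ≤ p a + p b)
    (hbdd : ∀ x, BddAbove (latticeMajorantSet p x)) {x y : E} (hx : 0 ≤ x) (hy : 0 ≤ y) :
    latticeMajorant p (x + y) = latticeMajorant p x + latticeMajorant p y := by
  refine le_antisymm (latticeMajorant_le (add_nonneg hx hy) fun l hl => ?_) ?_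
  · obtain ⟨la, lb, hla, hlb, hsum⟩ := exists_split_of_sum_abs_le hsub l hx hy hl
    linarith [sum_le_latticeMajorant (hbdd x) hla, sum_le_latticeMajorant (hbdd y) hlb]
  · have hcat : ∀ la lb : List E, (la.map abs).sum ≤ x → (lb.map abs).sum ≤ y →
        (la.map p).sum + (lb.map p).sum ≤ latticeMajorant p (x + y) := fun la lb hla hlb => by
      simpa using sum_le_latticeMajorant (hbdd (x + y)) (l := la ++ lb)
        (by simpa using add_le_add hla hlb)
    have : latticeMajorant p x ≤ latticeMajorant p (x + y) - latticeMajorant p y :=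
      latticeMajorant_le hx fun la hla => le_sub_comm.1 <|
        latticeMajorant_le hy fun lb hlb => le_sub_iff_add_le'.2 (hcat la lb hla hlb)
    linarith

end LatticeMajorant

section DominatingFunctional

theorem sum_map_abs_apply_le {E F G : Type*} [Lattice E] [AddCommGroup E] [IsOrderedAddMonoid E]
    [Lattice F] [AddCommGroup F] [IsOrderedAddMonoid F] [FunLike G E F] [AddMonoidHomClass G E F]
    (T : G) (l : List E) {d : F} (hT : ∀ w, |w| ≤ (l.map abs).sum → T w ≤ d) :
    (l.map fun z => |T z|).sum ≤ d := by
  induction l generalizing d with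
  | nil => simpa using hT 0 (by simp)
  | cons z t ih =>
    have hT' : ∀ w z', |w| ≤ (t.map abs).sum → |z'| = |z| → T w + T z' ≤ d := fun w z' hw hz' => by
      rw [← map_add]
      refine hT _ ((abs_add_le w z').trans ?_)
      rw [List.map_cons, List.sum_cons, hz', add_comm]
      exact add_le_add_right hw _
    have h₁ := ih fun w hw => le_sub_iff_add_le.2 (hT' w z hw rfl)
    have h₂ := ih fun w hw => by simpa [← sub_eq_add_neg] using hT' w (-z) hw (abs_neg z)
    rw [List.map_cons, List.sum_cons]
    change (T z ⊔ -T z) + _ ≤ d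
    rw [sup_add]
    exact sup_le ((add_le_add le_rfl h₁).trans_eq (add_sub_cancel _ _))
      ((add_le_add le_rfl h₂).trans_eq (by abel))

variable {E F : Type*} [NormedAddCommGroup E] [Lattice E] [HasSolidNorm E] [IsOrderedAddMonoid E]
  [NormedSpace ℝ E] [NormedAddCommGroup F] [Lattice F] [HasSolidNorm F] [IsOrderedAddMonoid F]
  [NormedSpace ℝ F]

/-- `∑_{f ∈ s} |f|`, built from the Riesz–Kantorovich formula `pabs f`. -/
theorem exists_monotone_pabs_le (s : Finset (F →L[ℝ] ℝ)) :
    ∃ g : F →ₗ[ℝ] ℝ, Monotone g ∧ ∀ f ∈ s, ∀ w, pabs f w ≤ g |w| := by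
  choose G hGmono hG using fun f : F →L[ℝ] ℝ =>
    exists_monotone_linearMap_eq (pabs f) (fun x _ => pabs_nonneg f x)
      (fun _ _ => pabs_add_of_nonneg f) (fun _ hc x _ => pabs_smul f hc x)
  refine ⟨∑ f ∈ s, G f, fun a b hab => ?_, fun f hf w => ?_⟩
  · simp only [LinearMap.sum_apply]
    exact Finset.sum_le_sum fun f _ => hGmono f hab
  · rw [← pabs_abs, ← hG f |w| (abs_nonneg w), LinearMap.sum_apply]
    exact Finset.single_le_sum (fun f' _ => by simpa using hGmono f' (abs_nonneg w)) hf

/-- The functional is `(∑_{f ∈ s} |f|) ∘ |T|`. -/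
theorem OrderBoundedOp.exists_monotone_pabs_apply_le [CompleteSpace E] {T : E →L[ℝ] F}
    (hT : OrderBoundedOp T) (s : Finset (F →L[ℝ] ℝ)) :
    ∃ φ : E →L[ℝ] ℝ, Monotone φ ∧ ∀ f ∈ s, ∀ z, pabs f (T z) ≤ φ |z| := by
  obtain ⟨g, hg, hgs⟩ := exists_monotone_pabs_le s
  set p : E → ℝ := fun z => g |T z|
  have hsub : ∀ a b, p (a + b) ≤ p a + p b := fun a b => by
    change g |T (a + b)| ≤ g |T a| + g |T b|
    rw [map_add T, ← map_add g]
    exact hg (abs_add_le _ _)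
  have hhom : ∀ c : ℝ, 0 < c → ∀ z, p (c • z) = c * p z := fun c hc z => by
    simp only [p, map_smul, abs_smul_of_nonneg hc.le, smul_eq_mul]
  have hbdd : ∀ x, BddAbove (latticeMajorantSet p x) := by
    intro x
    obtain ⟨_, d, hd⟩ := hT (-x) x
    refine ⟨g d, ?_⟩
    rintro _ ⟨l, hl, rfl⟩
    have hsum : (l.map fun z => |T z|).sum ≤ d :=
      sum_map_abs_apply_le T l fun w hw => (hd ⟨w, mem_Icc_of_abs_le (hw.trans hl), rfl⟩).2
    calc (l.map p).sum = g (l.map fun z => |T z|).sum := by rw [map_list_sum, List.map_map]; rfl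
      _ ≤ g d := hg hsum
  obtain ⟨ψ, hψ, hψp⟩ := exists_monotone_linearMap_eq (latticeMajorant p)
    (fun x hx => latticeMajorant_nonneg (hbdd x) hx)
    (fun x y hx hy => latticeMajorant_add hsub hbdd hx hy)
    (fun c hc x hx => latticeMajorant_smul hhom hbdd hc hx)
  refine ⟨ψ.mkContinuousOfExistsBound (LinearMap.exists_bound_of_monotone hψ), hψ,
    fun f hf z => ?_⟩
  calc pabs f (T z) ≤ p z := hgs f hf (T z)
    _ ≤ latticeMajorant p |z| := le_latticeMajorant_abs z (hbdd _)
    _ = ψ |z| := (hψp _ (abs_nonneg z)).symm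

end DominatingFunctional

section DisjointTails

variable {E : Type*} [Lattice E] [AddCommGroup E] [IsOrderedAddMonoid E]

theorem posPart_le_posPart_sub_add (x : E) {v : E} (hv : 0 ≤ v) : x⁺ ≤ (x - v)⁺ + v := by
  rw [posPart_def]
  exact sup_le ((sub_add_cancel x v).symm.le.trans (add_le_add_left (le_posPart _) v))
    (add_nonneg (posPart_nonneg _) hv)

theorem exists_seq_forall_sum_range_abs {A : Set E} {P : ℕ → E → E → Prop}
    (h : ∀ n s, 0 ≤ s → ∃ x ∈ A, P n x s) :
    ∃ b : ℕ → E, (∀ n, b n ∈ A) ∧ ∀ n, P n (b n) (∑ k ∈ Finset.range n, |b k|) := by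
  choose pick hpickA hpick using fun n (s : E) => h n |s| (abs_nonneg s)
  let S : ℕ → E := fun n => Nat.rec 0 (fun n s => s + |pick n s|) n
  have hS : ∀ n, S n = ∑ k ∈ Finset.range n, |pick k (S k)| := fun n => by
    induction n with
    | zero => rfl
    | succ n ih => rw [Finset.sum_range_succ, ← ih]
  refine ⟨fun n => pick n (S n), fun n => hpickA _ _, fun n => ?_⟩
  have hSn : ∑ k ∈ Finset.range n, |pick k (S k)| = |S n| := by
    rw [abs_of_nonneg (hS n ▸ Finset.sum_nonneg fun k _ => abs_nonneg _), hS n]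
  change P n (pick n (S n)) (∑ k ∈ Finset.range n, |pick k (S k)|)
  rw [hSn]
  exact hpick n (S n)

variable [Module ℝ E] [IsOrderedModule ℝ E]

theorem eq_zero_of_le_posPart_of_smul_le_negPart {r x : E} {c : ℝ} (hr : 0 ≤ r) (hc : 0 < c)
    (hc1 : c ≤ 1) (h₁ : r ≤ x⁺) (h₂ : c • r ≤ x⁻) : r = 0 := by
  have hcr : c • r ≤ x⁺ :=
    (smul_le_smul_of_nonneg_left h₁ hc.le).trans (smul_le_of_le_one_left (posPart_nonneg x) hc1)
  have : c • r ≤ c • 0 := by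
    rw [smul_zero]
    exact (le_inf hcr h₂).trans_eq (posPart_inf_negPart_eq_zero x)
  exact le_antisymm (le_of_smul_le_smul_left this hc) hr

/- For `n < m` put `c = 2⁻ⁿ 2⁻ᵐ` and `x = |bₙ| - c |bₘ|`: then `dₙ ≤ x⁺` because
`c |bₘ| ≤ 2⁻ⁿ w`, and `c dₘ ≤ x⁻` because `c 4ᵐ ≥ 1` and `|bₙ| ≤ Sₘ`. -/
theorem disjointSeq_posPart_sub {b S : ℕ → E} {w : E} (hS : ∀ n, 0 ≤ S n)
    (hbS : ∀ k n, k < n → |b k| ≤ S n) (hw : ∀ k, (2⁻¹ : ℝ) ^ k • |b k| ≤ w) :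
    DisjointSeq fun n => (|b n| - (4 : ℝ) ^ n • S n - (2⁻¹ : ℝ) ^ n • w)⁺ := by
  have hw0 : 0 ≤ w := (smul_nonneg (by positivity) (abs_nonneg _)).trans (hw 0)
  have key : ∀ n m, n < m → (|b n| - (4 : ℝ) ^ n • S n - (2⁻¹ : ℝ) ^ n • w)⁺ ⊓
      (|b m| - (4 : ℝ) ^ m • S m - (2⁻¹ : ℝ) ^ m • w)⁺ = 0 := by
    intro n m hnm
    set c : ℝ := 2⁻¹ ^ n * 2⁻¹ ^ m with hc_def
    have hc : 0 < c := by positivity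
    have hc4 : 1 ≤ c * 4 ^ m := by
      rw [hc_def, show (4 : ℝ) = 2 * 2 by norm_num, mul_pow, inv_pow, inv_pow]
      field_simp
      exact pow_le_pow_right₀ (by norm_num) hnm.le
    refine eq_zero_of_le_posPart_of_smul_le_negPart (x := |b n| - c • |b m|)
      (le_inf (posPart_nonneg _) (posPart_nonneg _)) hc
      (mul_le_one₀ (pow_le_one₀ (by norm_num) (by norm_num)) (by positivity)
        (pow_le_one₀ (by norm_num) (by norm_num))) (inf_le_left.trans (posPart_mono ?_)) ?_
    · have hcb : c • |b m| ≤ (2⁻¹ : ℝ) ^ n • w := by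
        rw [mul_smul]
        exact smul_le_smul_of_nonneg_left (hw m) (by positivity)
      rw [sub_sub]
      exact sub_le_sub_left (hcb.trans (le_add_of_nonneg_left
        (smul_nonneg (by positivity) (hS n)))) _
    · calc c • ((|b n| - (4 : ℝ) ^ n • S n - (2⁻¹ : ℝ) ^ n • w)⁺ ⊓
            (|b m| - (4 : ℝ) ^ m • S m - (2⁻¹ : ℝ) ^ m • w)⁺)
          ≤ c • (|b m| - (4 : ℝ) ^ m • |b n|)⁺ := by
            refine smul_le_smul_of_nonneg_left (inf_le_right.trans (posPart_mono ?_)) hc.le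
            refine (sub_le_self _ (smul_nonneg (by positivity) hw0)).trans (sub_le_sub_left ?_ _)
            exact smul_le_smul_of_nonneg_left (hbS n m hnm) (by positivity)
        _ = (c • |b m| - (c * 4 ^ m) • |b n|)⁺ := by
            rw [← posPart_smul_of_nonneg hc.le, smul_sub, smul_smul]
        _ ≤ (c • |b m| - |b n|)⁺ := posPart_mono (sub_le_sub_left
            (le_smul_of_one_le_left (abs_nonneg _) hc4) _)
        _ = (|b n| - c • |b m|)⁻ := by rw [← posPart_neg, neg_sub]
  intro m n hmn
  rw [LatDisjoint, abs_of_nonneg (posPart_nonneg _), abs_of_nonneg (posPart_nonneg _)]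
  rcases hmn.lt_or_gt with h | h
  · exact key m n h
  · rw [inf_comm]
    exact key n m h

end DisjointTails

section AlmostOrderBounded

variable {E : Type*} [NormedAddCommGroup E] [Lattice E] [HasSolidNorm E] [IsOrderedAddMonoid E]
  [NormedSpace ℝ E] [CompleteSpace E]

/- Otherwise choose `bₙ ∈ A` with `φ (|bₙ| - 4ⁿ Sₙ)⁺ > δ`, where `Sₙ = ∑_{k<n} |bₖ|`. The
disjoint sequence `dₙ = (|bₙ| - 4ⁿ Sₙ - 2⁻ⁿ w)⁺`, `w = ∑ 2⁻ᵏ |bₖ|`, lies in the solid hull of `A`,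
so `φ dₙ → 0`; but `φ dₙ + 2⁻ⁿ φ w > δ`. -/
theorem DisjointlyWeaklyCompact.exists_posPart_sub_le {A : Set E} (hA : DisjointlyWeaklyCompact A)
    {φ : E →L[ℝ] ℝ} (hφ : Monotone φ) {δ : ℝ} (hδ : 0 < δ) :
    ∃ u : E, 0 ≤ u ∧ ∀ x ∈ A, φ (|x| - u)⁺ ≤ δ := by
  by_contra! h
  obtain ⟨b, hbA, hb⟩ := exists_seq_forall_sum_range_abs (A := A)
    (P := fun n x s => δ < φ (|x| - (4 : ℝ) ^ n • s)⁺)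
    fun n s hs => h _ (smul_nonneg (by positivity) hs)
  set S : ℕ → E := fun n => ∑ k ∈ Finset.range n, |b k|
  have hS : ∀ n, 0 ≤ S n := fun n => Finset.sum_nonneg fun k _ => abs_nonneg (b k)
  have hbS : ∀ k n, k < n → |b k| ≤ S n := fun k n hkn =>
    Finset.single_le_sum (fun j _ => abs_nonneg (b j)) (Finset.mem_range.2 hkn)
  obtain ⟨M, hM⟩ := isBounded_iff_forall_norm_le.1 hA.1
  have hsum : Summable fun k => (2⁻¹ : ℝ) ^ k • |b k| := by
    refine Summable.of_norm_bounded ((summable_geometric_of_lt_one (by norm_num)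
      (by norm_num : (2⁻¹ : ℝ) < 1)).mul_right M) fun k => ?_
    rw [norm_smul, norm_abs_eq_norm, norm_pow, norm_inv, Real.norm_ofNat]
    exact mul_le_mul_of_nonneg_left (hM _ (hbA k)) (by positivity)
  set w := ∑' k, (2⁻¹ : ℝ) ^ k • |b k|
  have hw : ∀ k, (2⁻¹ : ℝ) ^ k • |b k| ≤ w := fun k =>
    hsum.le_tsum k fun j _ => smul_nonneg (by positivity) (abs_nonneg _)
  have hw0 : 0 ≤ w := tsum_nonneg fun j => smul_nonneg (by positivity) (abs_nonneg _)
  set d : ℕ → E := fun n => (|b n| - (4 : ℝ) ^ n • S n - (2⁻¹ : ℝ) ^ n • w)⁺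
  have hdA : ∀ n, d n ∈ SolidHull A := fun n => by
    refine ⟨b n, hbA n, ?_⟩
    rw [abs_of_nonneg (posPart_nonneg _), posPart_def]
    refine sup_le ((sub_le_self _ (smul_nonneg (by positivity) hw0)).trans
      (sub_le_self _ (smul_nonneg (by positivity) (hS n)))) (abs_nonneg _)
  have hlow : ∀ n, δ < φ (d n) + (2⁻¹ : ℝ) ^ n * φ w := fun n => (hb n).trans_le <| by
    rw [← smul_eq_mul, ← map_smul, ← map_add]
    exact hφ (posPart_le_posPart_sub_add _ (smul_nonneg (by positivity) hw0))
  have hlim : Tendsto (fun n => φ (d n) + (2⁻¹ : ℝ) ^ n * φ w) atTop (𝓝 0) := by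
    simpa using (hA.2 d hdA (disjointSeq_posPart_sub hS hbS hw) φ).add
      ((tendsto_pow_atTop_nhds_zero_of_lt_one (by norm_num : (0 : ℝ) ≤ 2⁻¹)
        (by norm_num)).mul_const (φ w))
  obtain ⟨n, hn⟩ := (hlim.eventually (gt_mem_nhds hδ)).exists
  exact (hlow n).not_gt hn

end AlmostOrderBounded

section AbsWeakTotalBoundedness

variable {F : Type*} [NormedAddCommGroup F] [Lattice F] [HasSolidNorm F] [IsOrderedAddMonoid F]
  [NormedSpace ℝ F]

/-- A finite `ε/2`-net `Ψ` yields one with centres in `B`: replace each `c ∈ Ψ` that is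
`ε/2`-close to some `b ∈ B` by such a `b`. -/
theorem awTotallyBounded_of_forall_exists_finset {B : Set F}
    (h : ∀ ε > (0 : ℝ), ∀ s : Finset (F →L[ℝ] ℝ), ∃ Ψ : Finset F,
      ∀ x ∈ B, ∃ c ∈ Ψ, ∀ f ∈ s, pabs f (x - c) < ε) :
    AWTotallyBounded B := by
  classical
  intro ε hε s
  obtain ⟨Ψ, hΨ⟩ := h (ε / 2) (half_pos hε) s
  let close (c : F) : Prop := ∃ b ∈ B, ∀ f ∈ s, pabs f (b - c) < ε / 2
  choose! center hcenterB hcenter using fun c (hc : close c) => hc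
  refine ⟨(Ψ.filter close).image center, ?_, fun x hx => ?_⟩
  · intro y hy
    obtain ⟨c, hc, rfl⟩ := Finset.mem_image.1 (Finset.mem_coe.1 hy)
    exact hcenterB c (Finset.mem_filter.1 hc).2
  · obtain ⟨c, hcΨ, hxc⟩ := hΨ x hx
    have hc : close c := ⟨x, hx, hxc⟩
    refine ⟨center c, Finset.mem_image_of_mem _ (Finset.mem_filter.2 ⟨hcΨ, hc⟩), fun f hf => ?_⟩
    have := hcenter c hc f hf
    rw [← pabs_neg, neg_sub] at this
    linarith [pabs_sub_le f x (center c) c, hxc f hf]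

end AbsWeakTotalBoundedness

theorem stmt16_general {E F : Type*} [NormedAddCommGroup E] [Lattice E] [HasSolidNorm E] [IsOrderedAddMonoid E] [NormedSpace ℝ E] [CompleteSpace E] [NormedAddCommGroup F] [Lattice F] [HasSolidNorm F] [IsOrderedAddMonoid F] [NormedSpace ℝ F]
    (T : E →L[ℝ] F) (h1 : OrderBoundedOp T) (h2 : AMALCompact T)
    (A : Set E) (hA : DisjointlyWeaklyCompact A) : AWTotallyBounded (T '' A) := by
  refine awTotallyBounded_of_forall_exists_finset fun ε hε s => ?_
  obtain ⟨φ, hφ, hφs⟩ := h1.exists_monotone_pabs_apply_le s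
  obtain ⟨u, hu, hAu⟩ := hA.exists_posPart_sub_le hφ (half_pos hε)
  obtain ⟨Ψ, -, hΨ⟩ := h2 u hu (ε / 2) (half_pos hε) s
  refine ⟨Ψ, ?_⟩
  rintro _ ⟨a, ha, rfl⟩
  set v := (a ⊔ -u) ⊓ u
  obtain ⟨c, hcΨ, hc⟩ := hΨ (T v) ⟨v, mem_Icc_of_abs_le (abs_truncate_le hu a), rfl⟩
  refine ⟨c, hcΨ, fun f hf => ?_⟩
  have htrunc : pabs f (T a - T v) ≤ ε / 2 := by
    rw [← map_sub]
    exact (hφs f hf _).trans ((hφ (abs_sub_truncate_le u a)).trans (hAu a ha))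
  linarith [pabs_sub_le f (T a) c (T v), hc f hf]

theorem stmt16 {E F : Type*} [NormedAddCommGroup E] [Lattice E] [HasSolidNorm E] [IsOrderedAddMonoid E] [NormedSpace ℝ E] [CompleteSpace E] [NormedAddCommGroup F] [Lattice F] [HasSolidNorm F] [IsOrderedAddMonoid F] [NormedSpace ℝ F] [CompleteSpace F]
    (T : E →L[ℝ] F) (h1 : OrderBoundedOp T) (h2 : AMALCompact T)
    (A : Set E) (hA : DisjointlyWeaklyCompact A) : AWTotallyBounded (T '' A) :=
  stmt16_general T h1 h2 A hA

end
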